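/- arXiv:1501.01274 — 3 statements merged into one kernel-verified Lean document; each statement's English description precedes it below -/
import Mathlib

section
/- Let 0 < n < d be integers and c₁ > 0. There is a constant C = C(n,d,c₁) < ∞ with the following property. Let μ be a Borel measure on ℝ^d with closed support E, let x₀ ∈ E, r > 0, let L ⊂ ℝ^d be an n-dimensional affine subspace, let c ≥ c₁ be a constant, and suppose that d_{B(x₀,2r)}(μ, c ℋⁿ|_L) ≤ ε r^{n+1} for some ε ∈ (0,1]. Then every y ∈ L ∩ B(x₀, r) satisfies dist(y, E) ≤ C ε^{1/(n+1)} r. -/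
open MeasureTheory Metric Set
open scoped ENNReal NNReal

noncomputable section

abbrev Euc (d : ℕ) := EuclideanSpace ℝ (Fin d)

/-- The closed support of a Borel measure on `ℝ^d`. -/
def msupport {d : ℕ} (μ : Measure (Euc d)) : Set (Euc d) :=
  {x | ∀ r > 0, 0 < μ (Metric.ball x r)}

/-- `L` is an `n`-dimensional affine subspace (an `n`-plane) of `ℝ^d`. -/
def IsNPlane {d : ℕ} (n : ℕ) (L : Set (Euc d)) : Prop :=
  ∃ W : AffineSubspace ℝ (Euc d), (W : Set (Euc d)) = L ∧ Module.finrank ℝ W.direction = n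

/-- `μ` is `n`-Ahlfors–David regular with constant `A` and (unbounded) support `E`. -/
def IsADRWith {d : ℕ} (n : ℕ) (A : ℝ) (μ : Measure (Euc d)) (E : Set (Euc d)) : Prop :=
  1 ≤ A ∧ msupport μ = E ∧ ¬ Bornology.IsBounded E ∧
    ∀ x ∈ E, ∀ r : ℝ, 0 < r →
      ENNReal.ofReal (A⁻¹ * r ^ n) ≤ μ (closedBall x r) ∧
      μ (closedBall x r) ≤ ENNReal.ofReal (A * r ^ n)

/-- `μ` is `n`-uniformly rectifiable: `n`-ADR plus big pieces of Lipschitz images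
(with BPLI constants `θ`, `M`). -/
def IsURWith {d : ℕ} (n : ℕ) (A θ M : ℝ) (μ : Measure (Euc d)) (E : Set (Euc d)) : Prop :=
  IsADRWith n A μ E ∧ 0 < θ ∧ 0 < M ∧
    ∀ x ∈ E, ∀ r : ℝ, 0 < r →
      ∃ g : EuclideanSpace ℝ (Fin n) → Euc d, LipschitzWith (Real.toNNReal M) g ∧
        ENNReal.ofReal (θ * r ^ n) ≤ μ (closedBall x r ∩ g '' (closedBall 0 r))

/-- `S` belongs to the kernel class `K_{n+β}(ℝ^d)` with constant `A`:
size bound `|S(x,y)| ≤ A|x-y|^{-(n+β)}` and Lipschitz-in-`y` bound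
`|S(x,y) - S(x,y')| ≤ A|y-y'| |x-y|^{-(n+β+1)}` for `|y-y'| ≤ |x-y|/2`. -/
def IsCZKernel {d : ℕ} (n : ℕ) (β A : ℝ) (S : Euc d → Euc d → ℝ) : Prop :=
  (∀ x y : Euc d, x ≠ y → |S x y| ≤ A / dist x y ^ ((n : ℝ) + β)) ∧
  (∀ x y y' : Euc d, x ≠ y → dist y y' ≤ dist x y / 2 →
    |S x y - S x y'| ≤ A * dist y y' / dist x y ^ ((n : ℝ) + β + 1))

/-! Put `ρ = dist(y, E)`. The tent `x ↦ (ρ - |x - y|)₊` is `1`-Lipschitz, supported in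
`B(y, ρ) ⊆ B(x₀, 2r)` and vanishes on `E`, so its `μ`-integral is `0`, while its integral against
`c ℋⁿ|_L` is at least `c₁ (ρ/2) ℋⁿ(L ∩ B(y, ρ/2)) = c₁ κₙ (ρ/2)ⁿ⁺¹`, with `κₙ` the `ℋⁿ`-measure of
the unit ball of `ℝⁿ`. Hence `c₁ κₙ (ρ/2)ⁿ⁺¹ ≤ ε rⁿ⁺¹`. -/

open Module

def tent {X : Type*} [PseudoMetricSpace X] (y : X) (ρ : ℝ) (x : X) : ℝ :=
  max (ρ - dist x y) 0

section Tent

variable {X : Type*} [PseudoMetricSpace X] {y : X} {ρ : ℝ}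

lemma tent_nonneg (x : X) : 0 ≤ tent y ρ x := le_max_right _ _

lemma tent_le (hρ : 0 ≤ ρ) (x : X) : tent y ρ x ≤ ρ :=
  max_le (sub_le_self _ dist_nonneg) hρ

lemma half_le_tent {x : X} (hx : x ∈ closedBall y (ρ / 2)) : ρ / 2 ≤ tent y ρ x := by
  rw [mem_closedBall] at hx
  exact le_max_of_le_left (by linarith)

lemma lipschitzWith_tent : LipschitzWith 1 (tent y ρ) := by
  unfold tent
  simpa using ((LipschitzWith.const ρ).sub (LipschitzWith.dist_left y)).max_const 0

lemma support_tent_subset : Function.support (tent y ρ) ⊆ ball y ρ := by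
  intro x hx
  by_contra hxy
  exact hx (max_eq_right (by rw [mem_ball, not_lt] at hxy; linarith))

lemma tsupport_tent_subset : tsupport (tent y ρ) ⊆ closedBall y ρ :=
  (closure_mono support_tent_subset).trans closure_ball_subset_closedBall

lemma half_mul_measureReal_le_setIntegral_tent [MeasurableSpace X] [OpensMeasurableSpace X]
    (ν : Measure X) {L : Set X} (hL : MeasurableSet L) (hρ : 0 ≤ ρ)
    (hfin : ν (L ∩ closedBall y ρ) ≠ ∞) :
    ρ / 2 * ν.real (L ∩ closedBall y (ρ / 2)) ≤ ∫ x in L, tent y ρ x ∂ν := by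
  have hint : IntegrableOn (tent y ρ) L ν := by
    rw [IntegrableOn, ← integrableOn_iff_integrable_of_support_subset
      (support_tent_subset.trans ball_subset_closedBall), IntegrableOn,
      Measure.restrict_restrict measurableSet_closedBall, inter_comm]
    refine Measure.integrableOn_of_bounded (M := ρ) hfin
      lipschitzWith_tent.continuous.aestronglyMeasurable (ae_of_all _ fun x => ?_)
    rw [Real.norm_of_nonneg (tent_nonneg x)]
    exact tent_le hρ x
  have hfin_half : ν (L ∩ closedBall y (ρ / 2)) ≠ ∞ :=
    ne_top_of_le_ne_top hfin (measure_mono (inter_subset_inter_right _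
      (closedBall_subset_closedBall (by linarith))))
  calc ρ / 2 * ν.real (L ∩ closedBall y (ρ / 2))
      ≤ ∫ x in L ∩ closedBall y (ρ / 2), tent y ρ x ∂ν :=
        setIntegral_ge_of_const_le_real (hL.inter measurableSet_closedBall) hfin_half
          (fun x hx => half_le_tent hx.2) (hint.mono_set inter_subset_left)
    _ ≤ ∫ x in L, tent y ρ x ∂ν :=
        setIntegral_mono_set hint (ae_of_all _ tent_nonneg)
          inter_subset_left.eventuallyLE

end Tent

lemma measure_compl_msupport {d : ℕ} (μ : Measure (Euc d)) : μ (msupport μ)ᶜ = 0 := by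
  refine measure_null_of_locally_null _ fun x hx => ?_
  simp only [msupport, mem_compl_iff, mem_ofPred_eq, not_forall, not_lt, nonpos_iff_eq_zero] at hx
  obtain ⟨r, hr, hμr⟩ := hx
  exact ⟨ball x r, mem_nhdsWithin_of_mem_nhds (ball_mem_nhds x hr), hμr⟩

lemma integral_tent_infDist_msupport {d : ℕ} (μ : Measure (Euc d)) (y : Euc d) :
    ∫ x, tent y (infDist y (msupport μ)) x ∂μ = 0 := by
  refine integral_eq_zero_of_ae (measure_mono_null (fun x hx => ?_) (measure_compl_msupport μ))
  have hxy : x ∈ ball y (infDist y (msupport μ)) := support_tent_subset hx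
  exact notMem_of_dist_lt_infDist (by rwa [mem_ball, dist_comm] at hxy)

section EuclideanBall

variable (n : ℕ)

lemma hausdorffMeasure_closedBall_euclideanSpace (x : EuclideanSpace ℝ (Fin n)) {s : ℝ}
    (hs : 0 ≤ s) :
    μH[n] (closedBall x s)
      = ENNReal.ofReal (s ^ n) * μH[n] (closedBall (0 : EuclideanSpace ℝ (Fin n)) 1) := by
  simpa using (μH[finrank ℝ (EuclideanSpace ℝ (Fin n))]).addHaar_closedBall' x hs

lemma hausdorffMeasure_unitClosedBall_euclideanSpace_pos :
    0 < μH[n] (closedBall (0 : EuclideanSpace ℝ (Fin n)) 1) := by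
  simpa using measure_closedBall_pos μH[finrank ℝ (EuclideanSpace ℝ (Fin n))] 0 one_pos

lemma hausdorffMeasure_unitClosedBall_euclideanSpace_lt_top :
    μH[n] (closedBall (0 : EuclideanSpace ℝ (Fin n)) 1) < ∞ := by
  simpa using measure_closedBall_lt_top (μ := μH[finrank ℝ (EuclideanSpace ℝ (Fin n))])
    (x := (0 : EuclideanSpace ℝ (Fin n))) (r := 1)

end EuclideanBall

lemma hausdorffMeasure_affineSubspace_inter_closedBall {E : Type*} [NormedAddCommGroup E]
    [InnerProductSpace ℝ E] [FiniteDimensional ℝ E] [MeasurableSpace E] [BorelSpace E] {n : ℕ}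
    (W : AffineSubspace ℝ E) (hW : finrank ℝ W.direction = n) {y : E} (hy : y ∈ W) (s : ℝ) :
    μH[n] ((W : Set E) ∩ closedBall y s) = μH[n] (closedBall (0 : EuclideanSpace ℝ (Fin n)) s) := by
  let e : W.direction ≃ₗᵢ[ℝ] EuclideanSpace ℝ (Fin n) :=
    ((stdOrthonormalBasis ℝ W.direction).reindex (finCongr hW)).repr
  let ψ : EuclideanSpace ℝ (Fin n) → E := fun v => (e.symm v : E) + y
  have hψ : Isometry ψ :=
    (IsometryEquiv.addRight y).isometry.comp (isometry_subtype_coe.comp e.symm.isometry)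
  have himage : ψ '' closedBall 0 s = (W : Set E) ∩ closedBall y s := by
    ext x
    constructor
    · rintro ⟨v, hv, rfl⟩
      refine ⟨by simpa [ψ] using AffineSubspace.vadd_mem_of_mem_direction (e.symm v).2 hy, ?_⟩
      rw [mem_closedBall, ← hψ.dist_eq v 0] at hv
      simpa [ψ] using hv
    · rintro ⟨hxW, hxB⟩
      have hd : x - y ∈ W.direction := AffineSubspace.vsub_mem_direction hxW hy
      refine ⟨e ⟨x - y, hd⟩, ?_, by simp [ψ]⟩
      simpa [dist_eq_norm] using hxB
  rw [← himage, hψ.hausdorffMeasure_image (Or.inl (Nat.cast_nonneg n))]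

lemma mul_pow_le_setIntegral_tent_affineSubspace {E : Type*} [NormedAddCommGroup E]
    [InnerProductSpace ℝ E] [FiniteDimensional ℝ E] [MeasurableSpace E] [BorelSpace E] {n : ℕ}
    (W : AffineSubspace ℝ E) (hW : finrank ℝ W.direction = n) {y : E} (hy : y ∈ W) {ρ : ℝ}
    (hρ : 0 ≤ ρ) :
    (μH[n] (closedBall (0 : EuclideanSpace ℝ (Fin n)) 1)).toReal * (ρ / 2) ^ (n + 1)
      ≤ ∫ x in (W : Set E), tent y ρ x ∂μH[n] := by
  have hball : ∀ s, 0 ≤ s → μH[n] ((W : Set E) ∩ closedBall y s)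
      = ENNReal.ofReal (s ^ n) * μH[n] (closedBall (0 : EuclideanSpace ℝ (Fin n)) 1) :=
    fun s hs => by
      rw [hausdorffMeasure_affineSubspace_inter_closedBall W hW hy,
        hausdorffMeasure_closedBall_euclideanSpace n 0 hs]
  have hWmeas : MeasurableSet (W : Set E) :=
    (W.isClosed_direction_iff.mp W.direction.closed_of_finiteDimensional).measurableSet
  calc (μH[n] (closedBall (0 : EuclideanSpace ℝ (Fin n)) 1)).toReal * (ρ / 2) ^ (n + 1)
      = ρ / 2 * μH[n].real ((W : Set E) ∩ closedBall y (ρ / 2)) := by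
        rw [measureReal_def, hball _ (by positivity), ENNReal.toReal_mul,
          ENNReal.toReal_ofReal (by positivity)]
        ring
    _ ≤ ∫ x in (W : Set E), tent y ρ x ∂μH[n] := by
        refine half_mul_measureReal_le_setIntegral_tent _ hWmeas hρ ?_
        rw [hball ρ hρ]
        exact ENNReal.mul_ne_top ENNReal.ofReal_ne_top
          (hausdorffMeasure_unitClosedBall_euclideanSpace_lt_top n).ne

lemma le_rpow_mul_rpow_mul_of_pow_succ_le (n : ℕ) {ρ A ε r : ℝ} (hρ : 0 ≤ ρ) (hA : 0 ≤ A)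
    (hε : 0 ≤ ε) (hr : 0 ≤ r) (h : ρ ^ (n + 1) ≤ A * ε * r ^ (n + 1)) :
    ρ ≤ A ^ (1 / ((n : ℝ) + 1)) * ε ^ (1 / ((n : ℝ) + 1)) * r := by
  have hn : ((n + 1 : ℕ) : ℝ)⁻¹ = 1 / ((n : ℝ) + 1) := by push_cast; ring
  rwa [← hn, ← Real.pow_rpow_inv_natCast hr n.succ_ne_zero, ← Real.mul_rpow hA hε,
    ← Real.mul_rpow (by positivity) (by positivity), Real.le_rpow_inv_iff_of_pos hρ
      (by positivity) (by positivity), Real.rpow_natCast]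

theorem statement6_general (n d : ℕ) (c₁ : ℝ) (hc₁ : 0 < c₁) :
    ∃ C : ℝ, 0 < C ∧
      ∀ (μ : Measure (Euc d)) (x₀ : Euc d) (r : ℝ) (L : Set (Euc d)) (c ε : ℝ),
        x₀ ∈ msupport μ → 0 < r → IsNPlane n L → c₁ ≤ c → 0 < ε → ε ≤ 1 →
        (∀ f : Euc d → ℝ, LipschitzWith 1 f → tsupport f ⊆ closedBall x₀ (2 * r) →
          |(∫ y, f y ∂μ) - c * ∫ y in L, f y ∂(μH[(n : ℝ)])| ≤ ε * r ^ (n + 1)) →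
        ∀ y ∈ L ∩ closedBall x₀ r,
          infDist y (msupport μ) ≤ C * ε ^ (1 / ((n : ℝ) + 1)) * r := by
  set κ := (μH[n] (closedBall (0 : EuclideanSpace ℝ (Fin n)) 1)).toReal
  have hκ : 0 < κ := ENNReal.toReal_pos
    (hausdorffMeasure_unitClosedBall_euclideanSpace_pos n).ne'
    (hausdorffMeasure_unitClosedBall_euclideanSpace_lt_top n).ne
  refine ⟨(2 ^ (n + 1) / (c₁ * κ)) ^ (1 / ((n : ℝ) + 1)), by positivity, ?_⟩
  rintro μ x₀ r _ c ε hx₀ hr ⟨W, rfl, hW⟩ hc hε - hdist y ⟨hyW, hyr⟩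
  set ρ := infDist y (msupport μ)
  have hρ : 0 ≤ ρ := infDist_nonneg
  have hρr : ρ ≤ r := (infDist_le_dist_of_mem hx₀).trans (mem_closedBall.mp hyr)
  have hsupp : tsupport (tent y ρ) ⊆ closedBall x₀ (2 * r) :=
    tsupport_tent_subset.trans (closedBall_subset_closedBall' (by linarith [mem_closedBall.mp hyr]))
  have hlower := mul_pow_le_setIntegral_tent_affineSubspace W hW hyW hρ
  have hI := (by positivity : 0 ≤ κ * (ρ / 2) ^ (n + 1)).trans hlower
  have hupper := hdist _ lipschitzWith_tent hsupp
  rw [integral_tent_infDist_msupport, zero_sub, abs_neg,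
    abs_of_nonneg (mul_nonneg (hc₁.le.trans hc) hI)] at hupper
  refine le_rpow_mul_rpow_mul_of_pow_succ_le n hρ (by positivity) hε.le hr.le ?_
  calc ρ ^ (n + 1) = 2 ^ (n + 1) / (c₁ * κ) * (c₁ * (κ * (ρ / 2) ^ (n + 1))) := by
        rw [div_pow]
        field_simp
    _ ≤ 2 ^ (n + 1) / (c₁ * κ) * (ε * r ^ (n + 1)) :=
        mul_le_mul_of_nonneg_left
          ((mul_le_mul hc hlower (by positivity) (hc₁.le.trans hc)).trans hupper) (by positivity)
    _ = 2 ^ (n + 1) / (c₁ * κ) * ε * r ^ (n + 1) := by ring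

/-- if `d_{B(x₀,2r)}(μ, c ℋⁿ|_L) ≤ ε r^{n+1}` with `c ≥ c₁ > 0`, then every
point of `L ∩ B(x₀,r)` is at distance at most `C ε^{1/(n+1)} r` from `supp μ`.
The condition `d_B(σ,ν) ≤ t` is spelled out as a bound over all `1`-Lipschitz functions
supported in `B`. -/
theorem statement6 (n d : ℕ) (hn : 0 < n) (hnd : n < d) (c₁ : ℝ) (hc₁ : 0 < c₁) :
    ∃ C : ℝ, 0 < C ∧
      ∀ (μ : Measure (Euc d)) (x₀ : Euc d) (r : ℝ) (L : Set (Euc d)) (c ε : ℝ),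
        x₀ ∈ msupport μ → 0 < r → IsNPlane n L → c₁ ≤ c → 0 < ε → ε ≤ 1 →
        (∀ f : Euc d → ℝ, LipschitzWith 1 f → tsupport f ⊆ closedBall x₀ (2 * r) →
          |(∫ y, f y ∂μ) - c * ∫ y in L, f y ∂(μH[(n : ℝ)])| ≤ ε * r ^ (n + 1)) →
        ∀ y ∈ L ∩ closedBall x₀ r,
          infDist y (msupport μ) ≤ C * ε ^ (1 / ((n : ℝ) + 1)) * r :=
  statement6_general n d c₁ hc₁
end
end

section
/- Let 0 < n < d be integers. There is a constant C = C(n,d) < ∞ with the following property. Let z ∈ ℝ^d, R > 0, let L, L′ ⊂ ℝ^d be n-dimensional affine subspaces both intersecting B(z,R), and suppose the Hausdorff distance satisfies d_H(L ∩ B(z,2R), L′ ∩ B(z,2R)) ≤ δ for some 0 ≤ δ ≤ R. Then for every Lipschitz function f : ℝ^d → ℝ with Lipschitz constant at most Λ and supp f ⊂ B(z,R), one has | ∫_L f dℋⁿ − ∫_{L′} f dℋⁿ | ≤ C Λ δ Rⁿ. -/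
/-!
Parametrize `L = q + V` and `L' = q' + V'` isometrically by `ℝⁿ`, so that both integrals become
integrals over `ℝⁿ` against `μH[n]`, a Haar measure there. The Hausdorff bound gives a point
`q' ∈ L'` within `δ` of `q ∈ L ∩ B(z,R)`, and puts every unit vector of `V` within `ε = 2δ/R` of
`V'`. Take an orthonormal eigenbasis `bᵢ` of `V` for the compression `P_V P_{V'}`: the projections
`P_{V'} bᵢ` are then mutually orthogonal, and after normalisation they form an orthonormal basis
of `V'` with each vector within `2ε` of `bᵢ`. The two parametrizations therefore differ by
`O(δ)` on the ball of radius `3R` that carries both integrands, and the Lipschitz bound on `f`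
yields `|∫_L f - ∫_{L'} f| ≤ Λ · O(δ) · μH[n](B(0,3R)) = O(Λ δ Rⁿ)`.
-/

open MeasureTheory Metric Set
open scoped ENNReal NNReal

noncomputable section

open Module
open scoped RealInnerProductSpace

lemma norm_inv_norm_smul_sub_le {E : Type*} [NormedAddCommGroup E] [NormedSpace ℝ E] {u x : E}
    (hx : ‖x‖ = 1) : ‖‖u‖⁻¹ • u - x‖ ≤ 2 * ‖u - x‖ := by
  have hscale : ‖‖u‖⁻¹ • u - u‖ ≤ ‖u - x‖ := by
    rcases eq_or_ne u 0 with rfl | hu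
    · simp
    · calc ‖‖u‖⁻¹ • u - u‖ = |(‖u‖⁻¹ - 1) * ‖u‖| := by
            rw [abs_mul, abs_norm, ← Real.norm_eq_abs, ← norm_smul, sub_smul, one_smul]
        _ = |‖x‖ - ‖u‖| := by
            rw [sub_mul, inv_mul_cancel₀ (norm_ne_zero_iff.mpr hu), hx, one_mul]
        _ ≤ ‖u - x‖ := (abs_norm_sub_norm_le x u).trans (norm_sub_rev x u).le
  linarith [norm_sub_le_norm_sub_add_norm_sub (‖u‖⁻¹ • u) u x]

section PrincipalVectors

variable {E : Type*} [NormedAddCommGroup E] [InnerProductSpace ℝ E] {V V' : Submodule ℝ E}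

lemma inner_starProjection_starProjection (K : Submodule ℝ E) [K.HasOrthogonalProjection]
    (x y : E) : ⟪K.starProjection x, K.starProjection y⟫ = ⟪K.starProjection x, y⟫ := by
  rw [← K.inner_starProjection_left_eq_right,
    K.starProjection_eq_self_iff.mpr (K.starProjection_apply_mem x)]

lemma isSymmetric_orthogonalProjectionOnto_comp_starProjection [V.HasOrthogonalProjection]
    [V'.HasOrthogonalProjection] :
    ((V.orthogonalProjectionOnto ∘L V'.starProjection ∘L V.subtypeL : V →L[ℝ] V) :
      V →ₗ[ℝ] V).IsSymmetric := by
  intro x y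
  simp only [ContinuousLinearMap.coe_coe, ContinuousLinearMap.comp_apply,
    Submodule.subtypeL_apply, Submodule.inner_orthogonalProjectionOnto_eq_of_mem_right,
    Submodule.inner_orthogonalProjectionOnto_eq_of_mem_left]
  exact V'.inner_starProjection_left_eq_right _ _

lemma exists_orthonormalBasis_near_of_lt_one [FiniteDimensional ℝ V] [FiniteDimensional ℝ V']
    {n : ℕ} (hV : finrank ℝ V = n) (hV' : finrank ℝ V' = n) {ε : ℝ} (hε : ε < 1)
    (hnear : ∀ v ∈ V, ‖v‖ = 1 → ∃ w ∈ V', ‖w - v‖ ≤ ε) :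
    ∃ (b : OrthonormalBasis (Fin n) ℝ V) (b' : OrthonormalBasis (Fin n) ℝ V'),
      ∀ i, ‖(b' i : E) - b i‖ ≤ 2 * ε := by
  set T : V →L[ℝ] V := V.orthogonalProjectionOnto ∘L V'.starProjection ∘L V.subtypeL
  have hT : (T : V →ₗ[ℝ] V).IsSymmetric :=
    isSymmetric_orthogonalProjectionOnto_comp_starProjection
  set b := hT.eigenvectorBasis hV
  set u : Fin n → E := fun i => V'.starProjection (b i)
  have hb_norm (i : Fin n) : ‖(b i : E)‖ = 1 := b.orthonormal.1 i
  have hu_near (i : Fin n) : ‖u i - b i‖ ≤ ε := by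
    obtain ⟨w, hw, hwb⟩ := hnear (b i) (b i).2 (hb_norm i)
    calc ‖u i - b i‖ = ⨅ x : V', ‖(b i : E) - x‖ := by
          rw [norm_sub_rev, Submodule.starProjection_minimal]
      _ ≤ ‖(b i : E) - w‖ := ciInf_le (f := fun x : V' => ‖(b i : E) - x‖)
          ⟨0, forall_mem_range.mpr fun _ => norm_nonneg _⟩ ⟨w, hw⟩
      _ ≤ ε := by rwa [norm_sub_rev]
  -- the `b i` are eigenvectors of `P_V ∘ P_{V'}`, so their projections to `V'` stay orthogonal
  have hu_orth : Pairwise fun i j => ⟪u i, u j⟫ = 0 := by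
    intro i j hij
    calc ⟪u i, u j⟫ = ⟪T (b i), b j⟫ := by simp [T, u, inner_starProjection_starProjection]
      _ = 0 := by
          rw [← ContinuousLinearMap.coe_coe, hT.apply_eigenvectorBasis, inner_smul_left,
            b.orthonormal.2 hij, mul_zero]
  have hu_pos (i : Fin n) : 0 < ‖u i‖ := by
    have := (abs_norm_sub_norm_le (u i) (b i)).trans (hu_near i)
    rw [hb_norm] at this
    linarith [abs_le.mp this]
  have hF : Orthonormal ℝ fun i => ‖u i‖⁻¹ • u i := by
    refine ⟨fun i => ?_, fun i j hij => ?_⟩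
    · rw [norm_smul, norm_inv, norm_norm, inv_mul_cancel₀ (hu_pos i).ne']
    · dsimp only
      rw [inner_smul_left, inner_smul_right, hu_orth hij, mul_zero, mul_zero]
  have hF' := hF.codRestrict V' fun i => V'.smul_mem _ (V'.starProjection_apply_mem _)
  refine ⟨b, OrthonormalBasis.mk hF'
    (hF'.linearIndependent.span_eq_top_of_card_eq_finrank' (by simp [hV'])).ge, fun i => ?_⟩
  rw [OrthonormalBasis.coe_mk]
  calc ‖‖u i‖⁻¹ • u i - b i‖ ≤ 2 * ‖u i - b i‖ := norm_inv_norm_smul_sub_le (hb_norm i)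
    _ ≤ 2 * ε := by linarith [hu_near i]

end PrincipalVectors

section NearIsometries

variable {E : Type*} [NormedAddCommGroup E] [InnerProductSpace ℝ E]
  {V V' : Submodule ℝ E} [FiniteDimensional ℝ V] [FiniteDimensional ℝ V'] {n : ℕ}

lemma exists_orthonormalBasis_near (hV : finrank ℝ V = n) (hV' : finrank ℝ V' = n) {ε : ℝ}
    (hnear : ∀ v ∈ V, ‖v‖ = 1 → ∃ w ∈ V', ‖w - v‖ ≤ ε) :
    ∃ (b : OrthonormalBasis (Fin n) ℝ V) (b' : OrthonormalBasis (Fin n) ℝ V'),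
      ∀ i, ‖(b' i : E) - b i‖ ≤ 2 * ε := by
  rcases lt_or_ge ε 1 with hε | hε
  · exact exists_orthonormalBasis_near_of_lt_one hV hV' hε hnear
  · refine ⟨(stdOrthonormalBasis ℝ V).reindex (finCongr hV),
      (stdOrthonormalBasis ℝ V').reindex (finCongr hV'), fun i => ?_⟩
    calc _ ≤ ‖(((stdOrthonormalBasis ℝ V').reindex (finCongr hV') i : V') : E)‖
          + ‖(((stdOrthonormalBasis ℝ V).reindex (finCongr hV) i : V) : E)‖ := norm_sub_le _ _
      _ = 2 := by simp only [Submodule.norm_coe, OrthonormalBasis.norm_eq_one]; norm_num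
      _ ≤ 2 * ε := by linarith

lemma exists_linearIsometry_near (hV : finrank ℝ V = n) (hV' : finrank ℝ V' = n) {ε : ℝ}
    (hnear : ∀ v ∈ V, ‖v‖ = 1 → ∃ w ∈ V', ‖w - v‖ ≤ ε) :
    ∃ ι ι' : EuclideanSpace ℝ (Fin n) →ₗᵢ[ℝ] E, range ι = V ∧ range ι' = V' ∧
      ∀ t, ‖ι t - ι' t‖ ≤ 2 * n * ε * ‖t‖ := by
  obtain ⟨b, b', hbb'⟩ := exists_orthonormalBasis_near hV hV' hnear
  have range_repr_symm {U : Submodule ℝ E} (c : OrthonormalBasis (Fin n) ℝ U) :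
      range (U.subtypeₗᵢ.comp c.repr.symm.toLinearIsometry) = U := by
    ext x
    refine ⟨?_, fun hx => ⟨c.repr ⟨x, hx⟩, by simp⟩⟩
    rintro ⟨t, rfl⟩
    exact (c.repr.symm t).2
  have apply_eq_sum {U : Submodule ℝ E} (c : OrthonormalBasis (Fin n) ℝ U) (t) :
      U.subtypeₗᵢ.comp c.repr.symm.toLinearIsometry t = ∑ i, t i • (c i : E) := by
    simp [← c.sum_repr_symm]
  refine ⟨_, _, range_repr_symm b, range_repr_symm b', fun t => ?_⟩
  rw [apply_eq_sum, apply_eq_sum, ← Finset.sum_sub_distrib]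
  calc ‖∑ i, (t i • (b i : E) - t i • (b' i : E))‖
      ≤ ∑ i, ‖t i‖ * ‖(b' i : E) - b i‖ := by
        refine norm_sum_le_of_le _ fun i _ => ?_
        rw [← smul_sub, norm_smul, norm_sub_rev]
    _ ≤ ∑ _i : Fin n, ‖t‖ * (2 * ε) := by
        gcongr with i
        · exact PiLp.norm_apply_le t i
        · exact hbb' i
    _ = 2 * n * ε * ‖t‖ := by simp; ring

end NearIsometries

section AffineSubspaces

variable {E : Type*} [NormedAddCommGroup E] [NormedSpace ℝ E] {W W' : AffineSubspace ℝ E} {q : E}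

lemma AffineSubspace.range_add_eq {P : Type*} {g : P → E} (hg : range g = W.direction)
    (hq : q ∈ W) : range (fun t => g t + q) = W := by
  ext x
  rw [SetLike.mem_coe, ← vsub_right_mem_direction_iff_mem hq, ← SetLike.mem_coe, ← hg,
    vsub_eq_sub]
  exact ⟨fun ⟨t, ht⟩ => ⟨t, by rw [← ht, add_sub_cancel_right]⟩,
    fun ⟨t, ht⟩ => ⟨t, by simp only [ht, sub_add_cancel]⟩⟩

lemma AffineSubspace.exists_mem_direction_norm_sub_le (hq : q ∈ W) {R δ : ℝ} (hR : 0 < R)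
    (hnear : ∀ x ∈ W, dist x q ≤ R → ∃ y ∈ W', dist x y ≤ δ) {v : E} (hv : v ∈ W.direction)
    (hv1 : ‖v‖ = 1) : ∃ w ∈ W'.direction, ‖w - v‖ ≤ 2 * δ / R := by
  obtain ⟨q', hq', hqq'⟩ := hnear q hq (by simp [hR.le])
  have hx : R • v + q ∈ W := vadd_mem_of_mem_direction (W.direction.smul_mem R hv) hq
  obtain ⟨y, hy, hxy⟩ := hnear _ hx (by simp [norm_smul, hv1, abs_of_pos hR])
  refine ⟨R⁻¹ • (y - q'), W'.direction.smul_mem _ (vsub_mem_direction hy hq'), ?_⟩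
  calc ‖R⁻¹ • (y - q') - v‖ = R⁻¹ * ‖(y - (R • v + q)) + (q - q')‖ := by
        rw [← norm_smul_of_nonneg (by positivity)]
        congr 1
        rw [smul_add, smul_sub, smul_sub, smul_add, smul_smul, inv_mul_cancel₀ hR.ne', one_smul,
          smul_sub]
        abel
    _ ≤ R⁻¹ * (δ + δ) := by
        gcongr
        refine (norm_add_le _ _).trans (add_le_add ?_ ?_)
        · rwa [← dist_eq_norm, dist_comm]
        · rwa [← dist_eq_norm]
    _ = 2 * δ / R := by ring

end AffineSubspaces

lemma exists_dist_le_of_hausdorffDist_le {X : Type*} [MetricSpace X] {s t : Set X} {x : X}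
    {r : ℝ} (hx : x ∈ s) (hs : Bornology.IsBounded s) (ht : IsCompact t) (ht0 : t.Nonempty)
    (h : hausdorffDist s t ≤ r) : ∃ y ∈ t, dist x y ≤ r := by
  obtain ⟨y, hy, hxy⟩ := ht.exists_infDist_eq_dist ht0 x
  refine ⟨y, hy, hxy ▸ (infDist_le_hausdorffDist_of_mem hx ?_).trans h⟩
  exact hausdorffEDist_ne_top_of_nonempty_of_bounded ⟨x, hx⟩ ht0 hs ht.isBounded

lemma AffineSubspace.exists_dist_le_of_hausdorffDist_inter_closedBall_le {E : Type*}
    [NormedAddCommGroup E] [NormedSpace ℝ E] [FiniteDimensional ℝ E] {W W' : AffineSubspace ℝ E}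
    {z q : E} {R δ : ℝ} (hqz : dist q z ≤ R) (hW' : ((W' : Set E) ∩ closedBall z (2 * R)).Nonempty)
    (h : hausdorffDist ((W : Set E) ∩ closedBall z (2 * R)) (W' ∩ closedBall z (2 * R)) ≤ δ) :
    ∀ x ∈ W, dist x q ≤ R → ∃ y ∈ W', dist x y ≤ δ := by
  intro x hx hxq
  have hxz : dist x z ≤ 2 * R := by linarith [dist_triangle x q z]
  obtain ⟨y, hy, hxy⟩ := exists_dist_le_of_hausdorffDist_le
    (show x ∈ (W : Set E) ∩ closedBall z (2 * R) from ⟨hx, mem_closedBall.mpr hxz⟩)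
    (isBounded_closedBall.subset inter_subset_right)
    ((isCompact_closedBall z (2 * R)).inter_left W'.closed_of_finiteDimensional) hW' h
  exact ⟨y, hy.1, hxy⟩

section Integrals

variable {G : Type*} [NormedAddCommGroup G] [NormedSpace ℝ G]

lemma Isometry.setIntegral_range {X Y : Type*} [MetricSpace X] [CompleteSpace X]
    [MeasurableSpace X] [BorelSpace X] [MetricSpace Y] [MeasurableSpace Y] [BorelSpace Y]
    {φ : X → Y} (hφ : Isometry φ) {s : ℝ} (hs : 0 ≤ s) (g : Y → G) :
    ∫ y in range φ, g y ∂μH[s] = ∫ x, g (φ x) ∂μH[s] := by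
  rw [← hφ.map_hausdorffMeasure (Or.inl hs), hφ.isClosedEmbedding.measurableEmbedding.integral_map]

lemma norm_integral_sub_le_of_eq_zero_off {X : Type*} [TopologicalSpace X] [R1Space X]
    [MeasurableSpace X] [OpensMeasurableSpace X] {μ : Measure X} [IsFiniteMeasureOnCompacts μ]
    {K : Set X} (hK : IsCompact K) {g g' : X → G} (hg : Continuous g) (hg' : Continuous g')
    (hgK : ∀ x ∉ K, g x = 0) (hg'K : ∀ x ∉ K, g' x = 0) {c : ℝ}
    (hc : ∀ x ∈ K, ‖g x - g' x‖ ≤ c) :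
    ‖∫ x, g x ∂μ - ∫ x, g' x ∂μ‖ ≤ c * μ.real K := by
  have hsub_off (x) (hx : x ∉ K) : g x - g' x = 0 := by rw [hgK x hx, hg'K x hx, sub_zero]
  rw [← integral_sub (hg.integrable_of_hasCompactSupport (.intro hK hgK))
      (hg'.integrable_of_hasCompactSupport (.intro hK hg'K)),
    ← setIntegral_eq_integral_of_forall_compl_eq_zero hsub_off]
  exact norm_setIntegral_le_of_norm_le_const hK.measure_lt_top hc

lemma Isometry.mapsTo_compl_closedBall {X Y : Type*} [PseudoMetricSpace X] [PseudoMetricSpace Y]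
    {φ : X → Y} (hφ : Isometry φ) {x : X} {z : Y} {R r : ℝ} (hr : dist (φ x) z + R ≤ r) :
    MapsTo φ (closedBall x r)ᶜ (closedBall z R)ᶜ := by
  intro t ht hφt
  have := dist_triangle (φ t) z (φ x)
  rw [hφ.dist_eq, dist_comm z] at this
  exact ht (mem_closedBall.mpr (by linarith [mem_closedBall.mp hφt]))

lemma norm_setIntegral_range_sub_le {n : ℕ} {E : Type*} [MetricSpace E] [MeasurableSpace E]
    [BorelSpace E] {φ φ' : EuclideanSpace ℝ (Fin n) → E} (hφ : Isometry φ) (hφ' : Isometry φ')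
    {f : E → G} {K : ℝ≥0} (hf : LipschitzWith K f) {z : E} {R : ℝ}
    (hf0 : ∀ y ∉ closedBall z R, f y = 0) {r a : ℝ} (hr : dist (φ 0) z + R ≤ r)
    (hr' : dist (φ' 0) z + R ≤ r) (ha : ∀ t ∈ closedBall 0 r, dist (φ t) (φ' t) ≤ a) :
    ‖∫ y in range φ, f y ∂μH[(n : ℝ)] - ∫ y in range φ', f y ∂μH[(n : ℝ)]‖
      ≤ K * a * (μH[(n : ℝ)] : Measure (EuclideanSpace ℝ (Fin n))).real (closedBall 0 r) := by
  rw [hφ.setIntegral_range n.cast_nonneg, hφ'.setIntegral_range n.cast_nonneg]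
  refine norm_integral_sub_le_of_eq_zero_off (isCompact_closedBall 0 r)
    (hf.continuous.comp hφ.continuous) (hf.continuous.comp hφ'.continuous)
    (fun t ht => hf0 _ (hφ.mapsTo_compl_closedBall hr ht))
    (fun t ht => hf0 _ (hφ'.mapsTo_compl_closedBall hr' ht)) fun t ht => ?_
  rw [← dist_eq_norm]
  exact (hf.dist_le_mul _ _).trans (mul_le_mul_of_nonneg_left (ha t ht) K.coe_nonneg)

end Integrals

theorem statement9_general (n d : ℕ) :
    ∃ C : ℝ, 0 < C ∧
      ∀ (z : Euc d) (R δ : ℝ) (L L' : Set (Euc d)),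
        0 < R → IsNPlane n L → IsNPlane n L' →
        (L ∩ closedBall z R).Nonempty → (L' ∩ closedBall z R).Nonempty →
        0 ≤ δ → δ ≤ R →
        hausdorffDist (L ∩ closedBall z (2 * R)) (L' ∩ closedBall z (2 * R)) ≤ δ →
        ∀ (Λ : ℝ) (f : Euc d → ℝ), 0 ≤ Λ →
          (∀ y y' : Euc d, |f y - f y'| ≤ Λ * dist y y') →
          tsupport f ⊆ closedBall z R →
          |(∫ y in L, f y ∂(μH[(n : ℝ)])) - ∫ y in L', f y ∂(μH[(n : ℝ)])|
            ≤ C * Λ * δ * R ^ n := by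
  set m := (μH[(n : ℝ)] : Measure (EuclideanSpace ℝ (Fin n))).real (ball 0 1)
  refine ⟨(1 + 12 * n) * 3 ^ n * m + 1, by positivity, ?_⟩
  rintro z R δ _ _ hR ⟨W, rfl, hW⟩ ⟨W', rfl, hW'⟩ ⟨q, hqW, hqz⟩ ⟨p', hp'W', hp'z⟩ hδ hδR hHD
    Λ f hΛ hf hsupp
  rw [mem_closedBall] at hqz
  have hnear := AffineSubspace.exists_dist_le_of_hausdorffDist_inter_closedBall_le hqz
    ⟨p', hp'W', closedBall_subset_closedBall (by linarith) hp'z⟩ hHD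
  obtain ⟨q', hq'W', hqq'⟩ := hnear q hqW (by simp [hR.le])
  obtain ⟨ι, ι', hι, hι', hιι'⟩ := exists_linearIsometry_near hW hW' fun v hv hv1 =>
    W.exists_mem_direction_norm_sub_le hqW hR hnear hv hv1
  have hf_lip : LipschitzWith Λ.toNNReal f := LipschitzWith.of_dist_le_mul fun y y' =>
    (hf y y').trans (by gcongr; exact Real.le_coe_toNNReal Λ)
  have hf0 (y : Euc d) (hy : y ∉ closedBall z R) : f y = 0 :=
    image_eq_zero_of_notMem_tsupport fun h => hy (hsupp h)
  have hdist (t : EuclideanSpace ℝ (Fin n)) (ht : t ∈ closedBall 0 (3 * R)) :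
      dist (ι t + q) (ι' t + q') ≤ (1 + 12 * n) * δ := by
    rw [mem_closedBall_zero_iff] at ht
    calc dist (ι t + q) (ι' t + q') ≤ ‖ι t - ι' t‖ + dist q q' := by
          rw [← dist_eq_norm]; exact dist_add_add_le _ _ _ _
      _ ≤ 2 * n * (2 * δ / R) * (3 * R) + δ := by
          gcongr
          exact (hιι' t).trans (by gcongr)
      _ = (1 + 12 * n) * δ := by field_simp; ring
  rw [← AffineSubspace.range_add_eq hι hqW, ← AffineSubspace.range_add_eq hι' hq'W',
    ← Real.norm_eq_abs]
  calc _ ≤ Λ * ((1 + 12 * n) * δ) * (3 * R) ^ n * m := by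
        have := norm_setIntegral_range_sub_le ((IsometryEquiv.addRight q).isometry.comp ι.isometry)
          ((IsometryEquiv.addRight q').isometry.comp ι'.isometry) hf_lip hf0 (r := 3 * R)
          (by simp; linarith) (by simp; linarith [dist_triangle q' q z, dist_comm q q']) hdist
        rwa [Measure.addHaar_real_closedBall _ _ (by positivity), finrank_euclideanSpace_fin,
          Real.coe_toNNReal _ hΛ, ← mul_assoc] at this
    _ ≤ ((1 + 12 * n) * 3 ^ n * m + 1) * Λ * δ * R ^ n := by
        have : 0 ≤ Λ * δ * R ^ n := by positivity
        rw [mul_pow]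
        linarith

/-- if two `n`-planes `L, L'` both meet `B(z,R)` and are at Hausdorff
distance at most `δ ≤ R` inside `B(z,2R)`, then for any `Λ`-Lipschitz function `f`
supported in `B(z,R)` one has `|∫_L f dℋⁿ - ∫_{L'} f dℋⁿ| ≤ C Λ δ Rⁿ`. -/
theorem statement9 (n d : ℕ) (hn : 0 < n) (hnd : n < d) :
    ∃ C : ℝ, 0 < C ∧
      ∀ (z : Euc d) (R δ : ℝ) (L L' : Set (Euc d)),
        0 < R → IsNPlane n L → IsNPlane n L' →
        (L ∩ closedBall z R).Nonempty → (L' ∩ closedBall z R).Nonempty →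
        0 ≤ δ → δ ≤ R →
        hausdorffDist (L ∩ closedBall z (2 * R)) (L' ∩ closedBall z (2 * R)) ≤ δ →
        ∀ (Λ : ℝ) (f : Euc d → ℝ), 0 ≤ Λ →
          (∀ y y' : Euc d, |f y - f y'| ≤ Λ * dist y y') →
          tsupport f ⊆ closedBall z R →
          |(∫ y in L, f y ∂(μH[(n : ℝ)])) - ∫ y in L', f y ∂(μH[(n : ℝ)])|
            ≤ C * Λ * δ * R ^ n :=
  statement9_general n d
end
end

section
/- Let d ≥ 1 be an integer, β > 0, A ≥ 0, and let μ be a locally finite Borel measure on ℝ^d. Suppose a assigns to each dyadic cube P ⊂ ℝ^d a number a(P) ≥ 0 such that Σ_{P ⊆ R} a(P) μ(P) ≤ A μ(R) for every dyadic cube R. Then for every dyadic cube R, Σ_{Q ⊆ R} μ(Q) Σ_{P : Q ⊆ P ⊆ R} (ℓ(Q)/ℓ(P))^β a(P) ≤ (1 − 2^{−β})^{−1} A μ(R), where Q and P run over dyadic cubes. -/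
open MeasureTheory Metric Set
open scoped ENNReal NNReal

noncomputable section

/-- The dyadic cube of generation `p.1 ∈ ℤ` indexed by `p.2 ∈ ℤ^d`, i.e. the set
`2^{-p.1}(p.2 + [0,1)^d)`. Its side length is `2^{-p.1}`. -/
def dyCube (d : ℕ) (p : ℤ × (Fin d → ℤ)) : Set (Euc d) :=
  {x : Euc d | ∀ i : Fin d,
    (p.2 i : ℝ) * (2 : ℝ) ^ (-p.1) ≤ x i ∧ x i < ((p.2 i : ℝ) + 1) * (2 : ℝ) ^ (-p.1)}

/-- The side length of the dyadic cube indexed by `p`. -/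
def dySide {d : ℕ} (p : ℤ × (Fin d → ℤ)) : ℝ := (2 : ℝ) ^ (-p.1)

/-!
Exchanging the order of summation turns the left-hand side into
`Σ_{P ⊆ R} a(P) Σ_{Q ⊆ P} (ℓ(Q)/ℓ(P))^β μ(Q)`. The cubes `Q ⊆ P` of a fixed generation
`P.1 + n` are pairwise disjoint, so their measures add up to at most `μ(P)`, while each of them
carries the weight `2^{-nβ}`. Summing the geometric series bounds the inner sum by
`(1 - 2^{-β})⁻¹ μ(P)`, and the packing condition bounds what is left by `A μ(R)`.
-/

lemma tsum_subtype_eq_tsum_ite {α β : Type*} [AddCommMonoid α] [TopologicalSpace α]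
    (P : β → Prop) [DecidablePred P] (f : β → α) :
    ∑' x : {x // P x}, f x = ∑' x, if P x then f x else 0 :=
  (tsum_subtype {x | P x} f).trans (tsum_congr fun x => by simp [indicator_apply])

lemma tsum_subtype_tsum_subtype_comm {α : Type*} (r : α → α → Prop)
    (hr : ∀ x y z, r x y → r y z → r x z) (c : α) (f : α → α → ℝ≥0∞) :
    ∑' x : {x // r x c}, ∑' y : {y // r x y ∧ r y c}, f x y
      = ∑' y : {y // r y c}, ∑' x : {x // r x y}, f x y := by
  classical
  have hL (x : α) : (if r x c then ∑' y : {y // r x y ∧ r y c}, f x y else 0)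
      = ∑' y, if r x y ∧ r y c then f x y else 0 := by
    split_ifs with hx
    · exact tsum_subtype_eq_tsum_ite _ _
    · exact (ENNReal.tsum_eq_zero.2 fun y => if_neg fun h => hx (hr _ _ _ h.1 h.2)).symm
  have hR (y : α) : (if r y c then ∑' x : {x // r x y}, f x y else 0)
      = ∑' x, if r x y ∧ r y c then f x y else 0 := by
    by_cases hy : r y c <;> simp [hy, tsum_subtype_eq_tsum_ite (r · y) (f · y)]
  calc ∑' x : {x // r x c}, ∑' y : {y // r x y ∧ r y c}, f x y
      = ∑' x, ∑' y, if r x y ∧ r y c then f x y else 0 :=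
        (tsum_subtype_eq_tsum_ite _ _).trans (tsum_congr hL)
    _ = ∑' y : {y // r y c}, ∑' x : {x // r x y}, f x y :=
        ENNReal.tsum_comm.trans ((tsum_subtype_eq_tsum_ite _ _).trans (tsum_congr hR)).symm

section DyadicCubes

variable {d : ℕ}

lemma dySide_pos (p : ℤ × (Fin d → ℤ)) : 0 < dySide p := zpow_pos two_pos _

lemma dyCube_eq_preimage_pi (p : ℤ × (Fin d → ℤ)) :
    dyCube d p = WithLp.ofLp ⁻¹'
      univ.pi fun i => Ico ((p.2 i : ℝ) * dySide p) ((p.2 i + 1) * dySide p) := by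
  ext x
  simp [dyCube, dySide]

lemma mem_dyCube_iff {p : ℤ × (Fin d → ℤ)} {x : Euc d} :
    x ∈ dyCube d p ↔ ∀ i, ⌊x i / dySide p⌋ = p.2 i := by
  simp [dyCube_eq_preimage_pi, Int.floor_eq_iff, le_div_iff₀, div_lt_iff₀, dySide_pos]

lemma measurableSet_dyCube (p : ℤ × (Fin d → ℤ)) : MeasurableSet (dyCube d p) := by
  rw [dyCube_eq_preimage_pi]
  exact (MeasurableSet.univ_pi fun _ => measurableSet_Ico).preimage (WithLp.measurable_ofLp 2 _)

lemma dySide_le_of_dyCube_subset (hd : 1 ≤ d) {p q : ℤ × (Fin d → ℤ)}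
    (h : dyCube d p ⊆ dyCube d q) : dySide p ≤ dySide q := by
  rw [dyCube_eq_preimage_pi, dyCube_eq_preimage_pi,
    preimage_subset_preimage_iff (by simp [WithLp.ofLp_surjective]), pi_subset_pi_iff] at h
  have hlt (r : ℤ × (Fin d → ℤ)) (i : Fin d) : (r.2 i : ℝ) * dySide r < (r.2 i + 1) * dySide r := by
    nlinarith [dySide_pos r]
  obtain hsub | hempty := h
  · have := (Ico_subset_Ico_iff (hlt p ⟨0, hd⟩)).1 (hsub ⟨0, hd⟩ (mem_univ _))
    linarith
  · obtain ⟨i, hi⟩ := univ_pi_eq_empty_iff.1 hempty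
    exact absurd hi (nonempty_Ico.2 (hlt p i)).ne_empty

lemma fst_le_of_dyCube_subset (hd : 1 ≤ d) {p q : ℤ × (Fin d → ℤ)}
    (h : dyCube d p ⊆ dyCube d q) : q.1 ≤ p.1 := by
  have := dySide_le_of_dyCube_subset hd h
  rwa [dySide, dySide, zpow_le_zpow_iff_right₀ one_lt_two, neg_le_neg_iff] at this

lemma pairwise_disjoint_dyCube (j : ℤ) :
    Pairwise (Function.onFun Disjoint fun z : Fin d → ℤ => dyCube d (j, z)) := by
  intro z w hzw
  refine Set.disjoint_left.2 fun x hz hw => hzw (funext fun i => ?_)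
  exact ((mem_dyCube_iff.1 hz i).symm.trans (mem_dyCube_iff.1 hw i))

lemma tsum_measure_dyCube_subset_le (μ : Measure (Euc d)) (j : ℤ) (s : Set (Euc d)) :
    ∑' z : {z : Fin d → ℤ // dyCube d (j, z) ⊆ s}, μ (dyCube d (j, z)) ≤ μ s :=
  (tsum_meas_le_meas_iUnion_of_disjoint μ
    (As := fun z : {z // dyCube d (j, z) ⊆ s} => dyCube d (j, z)) (fun _ => measurableSet_dyCube _)
    fun _ _ hzw => pairwise_disjoint_dyCube j (Subtype.coe_ne_coe.2 hzw)).trans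
    (measure_mono (iUnion_subset Subtype.prop))

lemma dySide_div_dySide (p q : ℤ × (Fin d → ℤ)) : dySide q / dySide p = 2 ^ (p.1 - q.1) := by
  rw [dySide, dySide, ← zpow_sub₀ two_ne_zero]; ring_nf

lemma rpow_two_zpow_neg_natCast (β : ℝ) (n : ℕ) :
    ((2 : ℝ) ^ (-(n : ℤ))) ^ β = ((2 : ℝ) ^ (-β)) ^ n := by
  rw [zpow_neg, zpow_natCast, Real.inv_rpow (by positivity), Real.rpow_neg zero_le_two, inv_pow,
    ← Real.rpow_natCast_mul zero_le_two, ← Real.rpow_mul_natCast zero_le_two, mul_comm]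

lemma ofReal_rpow_dySide_div (β : ℝ) (p : ℤ × (Fin d → ℤ)) (n : ℕ) (z : Fin d → ℤ) :
    ENNReal.ofReal ((dySide (p.1 + n, z) / dySide p) ^ β) = ENNReal.ofReal (2 ^ (-β)) ^ n := by
  rw [dySide_div_dySide, sub_add_cancel_left, rpow_two_zpow_neg_natCast,
    ENNReal.ofReal_pow (by positivity)]

lemma tsum_rpow_dySide_div_mul_measure_le (hd : 1 ≤ d) {β : ℝ} (hβ : 0 < β)
    (μ : Measure (Euc d)) (p : ℤ × (Fin d → ℤ)) :
    ∑' q : {q // dyCube d q ⊆ dyCube d p},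
        ENNReal.ofReal ((dySide q.1 / dySide p) ^ β) * μ (dyCube d q)
      ≤ ENNReal.ofReal ((1 - 2 ^ (-β))⁻¹) * μ (dyCube d p) := by
  set S := {q | dyCube d q ⊆ dyCube d p}
  set f := fun q => ENNReal.ofReal ((dySide q / dySide p) ^ β) * μ (dyCube d q)
  have h2β : (2 : ℝ) ^ (-β) < 1 := Real.rpow_lt_one_of_one_lt_of_neg one_lt_two (by linarith)
  have hsupp : (Function.support fun j => ∑' z, S.indicator f (j, z)) ⊆
      range fun n : ℕ => p.1 + n := by
    intro j hj
    obtain ⟨z, hz⟩ := not_forall.1 (mt ENNReal.tsum_eq_zero.2 hj)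
    have := fst_le_of_dyCube_subset hd (mem_of_indicator_ne_zero hz)
    exact ⟨(j - p.1).toNat, by dsimp only; omega⟩
  calc ∑' q : S, f q
      = ∑' j, ∑' z, S.indicator f (j, z) := by rw [tsum_subtype, ENNReal.tsum_prod']
    _ = ∑' n : ℕ, ∑' z, S.indicator f (p.1 + n, z) :=
      ((add_right_injective p.1).comp Nat.cast_injective |>.tsum_eq hsupp).symm
    _ ≤ ∑' n : ℕ, ENNReal.ofReal (2 ^ (-β)) ^ n * μ (dyCube d p) := by
      refine ENNReal.tsum_le_tsum fun n => ?_
      calc ∑' z, S.indicator f (p.1 + n, z)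
          = ENNReal.ofReal (2 ^ (-β)) ^ n *
              ∑' z : {z // dyCube d (p.1 + n, z) ⊆ dyCube d p}, μ (dyCube d (p.1 + n, z)) := by
            classical
            rw [tsum_subtype_eq_tsum_ite (fun z => dyCube d (p.1 + n, z) ⊆ dyCube d p)
              (fun z => μ (dyCube d (p.1 + n, z))), ← ENNReal.tsum_mul_left]
            congr 1; ext z
            simp only [indicator_apply, S, f, mem_ofPred_eq, ofReal_rpow_dySide_div, mul_ite,
              mul_zero]
        _ ≤ _ := by gcongr; exact tsum_measure_dyCube_subset_le μ _ _
    _ = ENNReal.ofReal ((1 - 2 ^ (-β))⁻¹) * μ (dyCube d p) := by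
      rw [ENNReal.tsum_mul_right, ENNReal.tsum_geometric, ENNReal.ofReal_inv_of_pos (by linarith),
        ENNReal.ofReal_sub _ (by positivity), ENNReal.ofReal_one]

end DyadicCubes

theorem statement13_general (d : ℕ) (hd : 1 ≤ d) (β A : ℝ) (hβ : 0 < β)
    (μ : Measure (Euc d))
    (a : ℤ × (Fin d → ℤ) → ℝ)
    (hCar : ∀ R : ℤ × (Fin d → ℤ),
      ∑' P : {p : ℤ × (Fin d → ℤ) // dyCube d p ⊆ dyCube d R},
          ENNReal.ofReal (a P.1) * μ (dyCube d P.1)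
        ≤ ENNReal.ofReal A * μ (dyCube d R)) :
    ∀ R : ℤ × (Fin d → ℤ),
      ∑' Q : {p : ℤ × (Fin d → ℤ) // dyCube d p ⊆ dyCube d R},
          μ (dyCube d Q.1) *
            ∑' P : {p : ℤ × (Fin d → ℤ) //
                dyCube d Q.1 ⊆ dyCube d p ∧ dyCube d p ⊆ dyCube d R},
              ENNReal.ofReal ((dySide Q.1 / dySide P.1) ^ β * a P.1)
        ≤ ENNReal.ofReal ((1 - (2 : ℝ) ^ (-β))⁻¹ * A) * μ (dyCube d R) := by
  intro R
  set K := ENNReal.ofReal ((1 - (2 : ℝ) ^ (-β))⁻¹)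
  set w := fun Q P : ℤ × (Fin d → ℤ) => ENNReal.ofReal ((dySide Q / dySide P) ^ β)
  have hK : 0 ≤ (1 - (2 : ℝ) ^ (-β))⁻¹ :=
    inv_nonneg.2 (sub_nonneg.2 (Real.rpow_le_one_of_one_le_of_nonpos one_le_two (by linarith)))
  calc _ = ∑' Q : {Q // dyCube d Q ⊆ dyCube d R},
          ∑' P : {P // dyCube d Q.1 ⊆ dyCube d P ∧ dyCube d P ⊆ dyCube d R},
            w Q P * μ (dyCube d Q) * ENNReal.ofReal (a P) := by
        refine tsum_congr fun Q => ?_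
        rw [← ENNReal.tsum_mul_left]
        refine tsum_congr fun P => ?_
        rw [ENNReal.ofReal_mul (Real.rpow_nonneg (div_pos (dySide_pos _) (dySide_pos _)).le _)]
        ring
    _ = ∑' P : {P // dyCube d P ⊆ dyCube d R},
          (∑' Q : {Q // dyCube d Q ⊆ dyCube d P}, w Q P * μ (dyCube d Q)) *
            ENNReal.ofReal (a P) :=
        (tsum_subtype_tsum_subtype_comm (fun Q P => dyCube d Q ⊆ dyCube d P)
          (fun _ _ _ => Subset.trans) R
          fun Q P => w Q P * μ (dyCube d Q) * ENNReal.ofReal (a P)).trans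
          (tsum_congr fun _ => ENNReal.tsum_mul_right)
    _ ≤ ∑' P : {P // dyCube d P ⊆ dyCube d R}, K * μ (dyCube d P) * ENNReal.ofReal (a P) := by
        gcongr with P
        exact tsum_rpow_dySide_div_mul_measure_le hd hβ μ P
    _ = K * ∑' P : {P // dyCube d P ⊆ dyCube d R}, ENNReal.ofReal (a P) * μ (dyCube d P) := by
        rw [← ENNReal.tsum_mul_left]
        exact tsum_congr fun P => by ring
    _ ≤ K * (ENNReal.ofReal A * μ (dyCube d R)) := by gcongr; exact hCar R
    _ = _ := by rw [ENNReal.ofReal_mul hK, mul_assoc]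

/-- if the nonnegative coefficients `a(P)` satisfy the Carleson packing
condition `Σ_{P ⊆ R} a(P) μ(P) ≤ A μ(R)`, then
`Σ_{Q ⊆ R} μ(Q) Σ_{Q ⊆ P ⊆ R} (ℓ(Q)/ℓ(P))^β a(P) ≤ (1 - 2^{-β})⁻¹ A μ(R)`. -/
theorem statement13 (d : ℕ) (hd : 1 ≤ d) (β A : ℝ) (hβ : 0 < β) (hA : 0 ≤ A)
    (μ : Measure (Euc d)) [IsLocallyFiniteMeasure μ]
    (a : ℤ × (Fin d → ℤ) → ℝ) (ha : ∀ p, 0 ≤ a p)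
    (hCar : ∀ R : ℤ × (Fin d → ℤ),
      ∑' P : {p : ℤ × (Fin d → ℤ) // dyCube d p ⊆ dyCube d R},
          ENNReal.ofReal (a P.1) * μ (dyCube d P.1)
        ≤ ENNReal.ofReal A * μ (dyCube d R)) :
    ∀ R : ℤ × (Fin d → ℤ),
      ∑' Q : {p : ℤ × (Fin d → ℤ) // dyCube d p ⊆ dyCube d R},
          μ (dyCube d Q.1) *
            ∑' P : {p : ℤ × (Fin d → ℤ) //
                dyCube d Q.1 ⊆ dyCube d p ∧ dyCube d p ⊆ dyCube d R},
              ENNReal.ofReal ((dySide Q.1 / dySide P.1) ^ β * a P.1)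
        ≤ ENNReal.ofReal ((1 - (2 : ℝ) ^ (-β))⁻¹ * A) * μ (dyCube d R) :=
  statement13_general d hd β A hβ μ a hCar
end
end
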